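/- Let F(t), E(u), S(t,u) be formal power series over a commutative Q-algebra with F(t)E(u) = (1+tu)(1+(t+u)S(t,u)) and F(0) = E(0) = 1. Then F'(t)/F(t) = S(t,-t) - t/(1-t^2) as formal power series; equivalently, the coefficient D_k of t^{k-1} in F'(t)/F(t) satisfies D_k = Σ_{i+j+1=k} (-1)^j Q_{(i|j)} + c_k, where S(t,u) = Σ Q_{(i|j)} t^i u^j and c_k = 0 for k odd, c_k = -1 for k even. -/

import Mathlib

open PowerSeries Finset

/-- Substitution `u = -t` in a two-variable formal power series, encoded as a power
series in `u` with coefficients that are power series in `t`. -/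
noncomputable def substNeg {A : Type*} [CommRing A]
    (G : PowerSeries (PowerSeries A)) : PowerSeries A :=
  PowerSeries.mk fun k =>
    ∑ j ∈ Finset.range (k + 1),
      ((-1 : A) ^ j) * PowerSeries.coeff (R := A) (k - j) (PowerSeries.coeff (R := PowerSeries A) j G)

/-- Formal logarithm of a power series (with constant term 1). -/
noncomputable def psLog {A : Type*} [CommRing A] [Algebra ℚ A] (F : PowerSeries A) :
    PowerSeries A :=
  PowerSeries.mk fun k =>
    ∑ n ∈ Finset.Icc 1 k, ((-1 : ℚ) ^ (n + 1) * (n : ℚ)⁻¹) • (coeff (R := _) k ((F - 1) ^ n))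

section Aux

variable {A : Type*} [CommRing A]

lemma coeff_derivativeFun' {R : Type*} [CommRing R] (f : PowerSeries R) (n : ℕ) :
    coeff (R := R) n (derivativeFun f) = coeff (R := R) (n + 1) f * (n + 1) :=
  coeff_derivative f n

lemma derivativeFun_C' {R : Type*} [CommRing R] (r : R) :
    derivativeFun (PowerSeries.C (R := R) r) = 0 :=
  derivative_C


lemma coeff_substNeg (G : PowerSeries (PowerSeries A)) (k : ℕ) :
    coeff (R := A) k (substNeg G) =
      ∑ j ∈ range (k + 1), ((-1 : A) ^ j) * coeff (R := A) (k - j) (coeff (R := PowerSeries A) j G) := by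
  simp [substNeg]

lemma coeff_eval_negX (P : Polynomial (PowerSeries A)) (k : ℕ) :
    coeff (R := A) k (P.eval (-X)) =
      ∑ j ∈ range (k + 1), ((-1 : A) ^ j) * coeff (R := A) (k - j) (P.coeff j) := by
  have hd : P.natDegree < max (P.natDegree + 1) (k + 1) := lt_of_lt_of_le (Nat.lt_succ_self _) (le_max_left _ _)
  rw [Polynomial.eval_eq_sum_range' hd, map_sum]
  rw [← Finset.sum_subset (Finset.range_subset_range.2 (le_max_right (P.natDegree + 1) (k + 1)))]
  · apply Finset.sum_congr rfl
    intro j hj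
    have hjk : j ≤ k := Nat.lt_succ_iff.mp (Finset.mem_range.mp hj)
    have : P.coeff j * (-X) ^ j = PowerSeries.C (R := A) ((-1 : A) ^ j) * (P.coeff j * X ^ j) := by
      rw [neg_pow]
      ring_nf
      simp [map_pow]
    rw [this, coeff_C_mul, coeff_mul_X_pow', if_pos hjk]
  · intro j hj hj2
    have hk : k < j := by
      have := Finset.mem_range.mp hj
      by_contra h
      exact hj2 (Finset.mem_range.mpr (Nat.lt_succ_of_le (le_of_not_gt h)))
    have : P.coeff j * (-X) ^ j = PowerSeries.C (R := A) ((-1 : A) ^ j) * (P.coeff j * X ^ j) := by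
      rw [neg_pow]
      ring_nf
      simp [map_pow]
    rw [this, coeff_C_mul, coeff_mul_X_pow', if_neg (by omega), mul_zero]

lemma coeff_substNeg_eq_trunc (G : PowerSeries (PowerSeries A)) {k n : ℕ} (h : k < n) :
    coeff (R := A) k (substNeg G) = coeff (R := A) k ((PowerSeries.trunc n G).eval (-X)) := by
  rw [coeff_substNeg, coeff_eval_negX]
  apply Finset.sum_congr rfl
  intro j hj
  have : j < n := lt_of_le_of_lt (Nat.lt_succ_iff.mp (Finset.mem_range.mp hj)) h
  rw [coeff_trunc, if_pos this]

lemma coeff_eval_negX_coe (Q : Polynomial (PowerSeries A)) {k n : ℕ} (h : k < n) :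
    coeff (R := A) k ((PowerSeries.trunc n (Q : PowerSeries (PowerSeries A))).eval (-X)) =
      coeff (R := A) k (Q.eval (-X)) := by
  rw [coeff_eval_negX, coeff_eval_negX]
  apply Finset.sum_congr rfl
  intro j hj
  have : j < n := lt_of_le_of_lt (Nat.lt_succ_iff.mp (Finset.mem_range.mp hj)) h
  rw [coeff_trunc, if_pos this, Polynomial.coeff_coe]

lemma substNeg_mul (G H : PowerSeries (PowerSeries A)) :
    substNeg (G * H) = substNeg G * substNeg H := by
  ext k
  rw [coeff_substNeg_eq_trunc (G * H) (Nat.lt_succ_self k), ← trunc_trunc_mul_trunc,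
    ← Polynomial.coe_mul, coeff_eval_negX_coe _ (Nat.lt_succ_self k), Polynomial.eval_mul,
    PowerSeries.coeff_mul, PowerSeries.coeff_mul]
  apply Finset.sum_congr rfl
  intro p hp
  have h1 : p.1 < k + 1 := Nat.lt_succ_of_le (Finset.HasAntidiagonal.antidiagonal.fst_le hp)
  have h2 : p.2 < k + 1 := Nat.lt_succ_of_le (Finset.HasAntidiagonal.antidiagonal.snd_le hp)
  rw [coeff_substNeg_eq_trunc G h1, coeff_substNeg_eq_trunc H h2]

lemma substNeg_add (G H : PowerSeries (PowerSeries A)) :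
    substNeg (G + H) = substNeg G + substNeg H := by
  ext k
  simp [coeff_substNeg, mul_add, Finset.sum_add_distrib]

lemma substNeg_one : substNeg (1 : PowerSeries (PowerSeries A)) = 1 := by
  ext k
  rw [coeff_substNeg]
  rcases Nat.eq_zero_or_pos k with hk | hk
  · subst hk; simp [coeff_one]
  · rw [Finset.sum_eq_zero, coeff_one, if_neg (by omega)]
    intro j hj
    rcases Nat.eq_zero_or_pos j with hj0 | hj0
    · subst hj0; simp [coeff_one, if_neg (by omega : ¬ k = 0), Nat.pos_iff_ne_zero.mp hk]
    · simp [coeff_one, Nat.pos_iff_ne_zero.mp hj0]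

lemma substNeg_C (f : PowerSeries A) : substNeg (PowerSeries.C (R := PowerSeries A) f) = f := by
  ext k
  rw [coeff_substNeg, Finset.sum_eq_single 0]
  · simp
  · intro j hj hj0
    simp [coeff_C, hj0]
  · simp

lemma substNeg_X : substNeg (X : PowerSeries (PowerSeries A)) = -X := by
  ext k
  rcases Nat.eq_zero_or_pos k with hk | hk
  · subst hk; simp [coeff_substNeg, coeff_X]
  · rw [coeff_substNeg, Finset.sum_eq_single 1]
    · rw [coeff_X, if_pos rfl, map_neg, PowerSeries.coeff_X, pow_one, coeff_one]
      by_cases h1 : k = 1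
      · simp [h1]
      · have : k - 1 ≠ 0 := by omega
        simp [h1, this]
    · intro j hj hj1
      simp [coeff_X, hj1]
    · intro h
      exact absurd (Finset.mem_range.mpr (by omega)) h

lemma coeff_substNeg_map (E : PowerSeries A) (k : ℕ) :
    coeff (R := A) k (substNeg (PowerSeries.map (PowerSeries.C (R := A)) E)) = (-1) ^ k * coeff (R := A) k E := by
  rw [coeff_substNeg, Finset.sum_eq_single k]
  · simp [coeff_map, coeff_C]
  · intro j hj hjk
    have hjlt : j < k := lt_of_le_of_ne (Nat.lt_succ_iff.mp (Finset.mem_range.mp hj)) hjk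
    have hne : k - j ≠ 0 := by omega
    rw [coeff_map, coeff_C, if_neg hne, mul_zero]
  · simp

lemma substNeg_deriv_map (E : PowerSeries A) :
    substNeg (derivativeFun (PowerSeries.map (PowerSeries.C (R := A)) E)) =
      - derivativeFun (substNeg (PowerSeries.map (PowerSeries.C (R := A)) E)) := by
  ext k
  rw [map_neg, coeff_derivativeFun', coeff_substNeg_map, coeff_substNeg, Finset.sum_eq_single k]
  · rw [coeff_derivativeFun', coeff_map, Nat.sub_self]
    have : ((k : PowerSeries A) + 1) = PowerSeries.C (R := A) ((k : A) + 1) := by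
      rw [map_add, map_one, map_natCast]
    rw [this, ← map_mul, coeff_zero_C, pow_succ]
    ring
  · intro j hj hjk
    have hjlt : j < k := lt_of_le_of_ne (Nat.lt_succ_iff.mp (Finset.mem_range.mp hj)) hjk
    have hne : k - j ≠ 0 := by omega
    have : ((j : PowerSeries A) + 1) = PowerSeries.C (R := A) ((j : A) + 1) := by
      rw [map_add, map_one, map_natCast]
    rw [coeff_derivativeFun', coeff_map, this, ← map_mul, coeff_C, if_neg hne, mul_zero]
  · simp

lemma derivativeFun_X : derivativeFun (X : PowerSeries (PowerSeries A)) = 1 :=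
  derivative_X


lemma coeff_pow_mul_eq_zero {G f : PowerSeries A} (hG : constantCoeff (R := A) G = 0) {m i : ℕ}
    (h : m < i) : coeff (R := A) m (G ^ i * f) = 0 := by
  obtain ⟨g, hg⟩ : (X : PowerSeries A) ^ i ∣ G ^ i * f :=
    Dvd.dvd.mul_right (pow_dvd_pow_of_dvd (X_dvd_iff.mpr hG) i) f
  rw [hg, coeff_X_pow_mul', if_neg (by omega)]

lemma neg_one_pow_rat_smul [Algebra ℚ A] (n : ℕ) (x : A) :
    ((-1 : ℚ) ^ n) • x = (-1 : A) ^ n * x := by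
  rcases Nat.even_or_odd n with h | h
  · rw [h.neg_one_pow, h.neg_one_pow, one_smul, one_mul]
  · rw [h.neg_one_pow, h.neg_one_pow, neg_smul, one_smul, neg_one_mul]

lemma psLog_deriv [Algebra ℚ A] (F : PowerSeries A) (hF : constantCoeff (R := A) F = 1) :
    derivativeFun (psLog F) * F = derivativeFun F := by
  set G : PowerSeries A := F - 1 with hGdef
  have hG : constantCoeff (R := A) G = 0 := by simp [hGdef, hF]
  set H : PowerSeries A := PowerSeries.mk fun m =>
    ∑ i ∈ range (m + 1), (-1 : A) ^ i * coeff (R := A) m (G ^ i * derivativeFun G) with hHdef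
  have stepA : derivativeFun (psLog F) = H := by
    ext m
    rw [coeff_derivativeFun', hHdef, coeff_mk]
    show (coeff (R := A) (m+1) (psLog F)) * _ = _
    rw [psLog, coeff_mk, ← Finset.Ico_add_one_right_eq_Icc, Finset.sum_Ico_eq_sum_range]
    rw [Finset.sum_mul]
    apply Finset.sum_congr rfl
    intro i _
    have hpow : derivativeFun (G ^ (i + 1)) = ((i : PowerSeries A) + 1) * (G ^ i * derivativeFun G) := by
      have h := Derivation.leibniz_pow (PowerSeries.derivative A) G (i + 1)
      simp only [Nat.add_sub_cancel, smul_eq_mul, nsmul_eq_mul, Nat.cast_add, Nat.cast_one] at h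
      exact h
    have hC : ((i : PowerSeries A) + 1) = PowerSeries.C (R := A) ((i : A) + 1) := by
      rw [← map_natCast (PowerSeries.C (R := A)) i, ← map_one (PowerSeries.C (R := A)), ← map_add]
    have hcd : coeff (R := A) (m + 1) (G ^ (1 + i)) * ((m : A) + 1)
        = ((i : A) + 1) * coeff (R := A) m (G ^ i * derivativeFun G) := by
      rw [← coeff_derivativeFun', add_comm 1 i, hpow, hC, coeff_C_mul]
    have hsm : ((i : A) + 1) * coeff (R := A) m (G ^ i * derivativeFun G)
        = ((i : ℚ) + 1) • coeff (R := A) m (G ^ i * derivativeFun G) := by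
      rw [Algebra.smul_def, map_add, map_one, map_natCast]
    rw [smul_mul_assoc, hcd, hsm, smul_smul]
    have hq : ((-1 : ℚ) ^ (1 + i + 1) * ((1 + i : ℕ) : ℚ)⁻¹) * ((i : ℚ) + 1) = (-1 : ℚ) ^ i := by
      have h0 : ((1 + i : ℕ) : ℚ) ≠ 0 := by positivity
      field_simp
      rw [show 1 + i + 1 = i + 2 from by omega, pow_succ, pow_succ]
      push_cast
      ring
    rw [hq, neg_one_pow_rat_smul]
  have hdF : derivativeFun F = derivativeFun G := by
    have : F = G + 1 := by ring
    rw [this, derivativeFun_add, derivativeFun_one, add_zero]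
  rw [stepA, hdF]
  ext m
  set P : PowerSeries A :=
    ∑ i ∈ range (m + 1), PowerSeries.C (R := A) ((-1 : A) ^ i) * (G ^ i * derivativeFun G) with hPdef
  have hHP : ∀ p ≤ m, coeff (R := A) p H = coeff (R := A) p P := by
    intro p hp
    rw [hHdef, coeff_mk, hPdef, map_sum]
    rw [← Finset.sum_subset (Finset.range_subset_range.2 (by omega : p + 1 ≤ m + 1))]
    · exact Finset.sum_congr rfl fun i _ => by rw [coeff_C_mul]
    · intro i hi hi2
      have : p < i := by
        simp only [Finset.mem_range] at hi hi2; omega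
      rw [coeff_C_mul, coeff_pow_mul_eq_zero hG this, mul_zero]
  have hmul : coeff (R := A) m (H * F) = coeff (R := A) m (P * F) := by
    rw [PowerSeries.coeff_mul, PowerSeries.coeff_mul]
    apply Finset.sum_congr rfl
    intro p hp
    rw [hHP p.1 (Finset.HasAntidiagonal.antidiagonal.fst_le hp)]
  rw [hmul]
  have hFG : F = 1 + G := by ring
  have htel : P * (1 + G) = derivativeFun G
      - PowerSeries.C (R := A) ((-1 : A) ^ (m + 1)) * (G ^ (m + 1) * derivativeFun G) := by
    have key := Finset.sum_range_sub
      (fun i => -(PowerSeries.C (R := A) ((-1 : A) ^ i) * (G ^ i * derivativeFun G))) (m + 1)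
    have hterm : ∀ i, PowerSeries.C (R := A) ((-1 : A) ^ i) * (G ^ i * derivativeFun G) * (1 + G)
        = -(PowerSeries.C (R := A) ((-1 : A) ^ (i+1)) * (G ^ (i+1) * derivativeFun G))
          - -(PowerSeries.C (R := A) ((-1 : A) ^ i) * (G ^ i * derivativeFun G)) := by
      intro i
      rw [pow_succ, pow_succ, map_mul]
      simp only [map_neg, map_one]
      ring
    rw [hPdef, Finset.sum_mul]
    calc ∑ i ∈ range (m+1), PowerSeries.C (R := A) ((-1 : A) ^ i) * (G ^ i * derivativeFun G) * (1 + G)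
        = ∑ i ∈ range (m+1),
            ((fun i => -(PowerSeries.C (R := A) ((-1 : A) ^ i) * (G ^ i * derivativeFun G))) (i+1)
            - (fun i => -(PowerSeries.C (R := A) ((-1 : A) ^ i) * (G ^ i * derivativeFun G))) i) := by
          exact Finset.sum_congr rfl fun i _ => hterm i
      _ = _ := by rw [key]; simp; ring
  rw [hFG, htel, map_sub, coeff_C_mul, coeff_pow_mul_eq_zero hG (Nat.lt_succ_self m), mul_zero,
    sub_zero]

lemma derivativeFun_X' : derivativeFun (X : PowerSeries (PowerSeries A)) = 1 :=
  derivative_X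

lemma derivativeFun_one_sub_X_sq : derivativeFun ((1 : PowerSeries A) - X ^ 2) = -(X + X) := by
  ext n
  rw [coeff_derivativeFun']
  by_cases h : n = 1
  · subst h; simp [coeff_X_pow, coeff_one, coeff_X]
  · have h2 : n + 1 ≠ 2 := by omega
    have h0 : n + 1 ≠ 0 := by omega
    simp [coeff_one, coeff_X_pow, coeff_X, h, h2, h0]

lemma oddser_mul :
    (PowerSeries.mk fun n => if Odd n then (-1 : A) else 0) * (1 - X ^ 2) = -X := by
  have h : (PowerSeries.mk fun n => if Odd n then (-1 : A) else 0) * (1 - X ^ 2)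
      = (PowerSeries.mk fun n => if Odd n then (-1 : A) else 0)
        - (PowerSeries.mk fun n => if Odd n then (-1 : A) else 0) * X ^ 2 := by ring
  rw [h]
  ext n
  rw [map_sub, coeff_mk, coeff_mul_X_pow', map_neg, coeff_X]
  rcases n with _ | n
  · norm_num
  rcases n with _ | n
  · norm_num [Nat.odd_iff]
  · have h2 : 2 ≤ n + 1 + 1 := by omega
    rw [if_pos h2, show n + 1 + 1 - 2 = n from by omega, if_neg (by omega : ¬ n + 1 + 1 = 1),
      coeff_mk]
    have hodd : Odd (n + 1 + 1) ↔ Odd n := by rw [Nat.odd_iff, Nat.odd_iff]; omega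
    by_cases ho : Odd n
    · rw [if_pos (hodd.mpr ho), if_pos ho]; simp
    · rw [if_neg (fun hh => ho (hodd.mp hh)), if_neg ho]; simp

end Aux

/-- If `F(t)E(u) = (1+tu)(1+(t+u)S(t,u))` with `F(0) = E(0) = 1`, then
`F'(t)/F(t) = S(t,-t) - t/(1-t²)`; equivalently, with `D_k` defined by
`Σ (D_k/k)tᵏ = log F`, one has `D_k = Σ_{i+j+1=k} (-1)ʲ Q_{(i|j)} + c_k`. -/
theorem hook_series_D_formula {A : Type*} [CommRing A] [Algebra ℚ A]
    (F E : PowerSeries A) (S : PowerSeries (PowerSeries A))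
    (hF : PowerSeries.constantCoeff (R := A) F = 1) (hE : PowerSeries.constantCoeff (R := A) E = 1)
    (hFE : PowerSeries.C (R := PowerSeries A) F *
        PowerSeries.map (PowerSeries.C (R := A)) E =
      (1 + PowerSeries.C (R := PowerSeries A) PowerSeries.X * PowerSeries.X) *
        (1 + (PowerSeries.C (R := PowerSeries A) PowerSeries.X + PowerSeries.X) * S))
    (D : ℕ → A)
    (hD : (PowerSeries.mk fun k => if k = 0 then 0 else ((k : ℚ)⁻¹) • D k) = psLog F) :
    PowerSeries.derivativeFun F * (1 - PowerSeries.X ^ 2) =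
      (substNeg S * (1 - PowerSeries.X ^ 2) - PowerSeries.X) * F ∧
    ∀ k : ℕ, 1 ≤ k →
      D k = (∑ j ∈ Finset.range k,
          ((-1 : A) ^ j) * PowerSeries.coeff (R := A) (k - 1 - j) (PowerSeries.coeff (R := PowerSeries A) j S))
        + (if Even k then -1 else 0) := by
  have part1 : PowerSeries.derivativeFun F * (1 - PowerSeries.X ^ 2) =
      (substNeg S * (1 - PowerSeries.X ^ 2) - PowerSeries.X) * F := by
    set Em := substNeg (PowerSeries.map (PowerSeries.C (R := A)) E) with hEm
    have h1 : F * Em = 1 - X ^ 2 := by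
      have h := congrArg substNeg hFE
      simp only [substNeg_mul, substNeg_add, substNeg_one, substNeg_C, substNeg_X] at h
      rw [← hEm] at h
      linear_combination h
    have h2 := congrArg substNeg (congrArg derivativeFun hFE)
    simp only [derivativeFun_mul, derivativeFun_add, derivativeFun_one, derivativeFun_C',
      derivativeFun_X', smul_eq_mul, mul_one, mul_zero, add_zero, zero_add,
      substNeg_mul, substNeg_add, substNeg_one, substNeg_C, substNeg_X, substNeg_deriv_map] at h2
    rw [← hEm] at h2
    have h3 := congrArg derivativeFun h1
    rw [derivativeFun_mul, derivativeFun_one_sub_X_sq, smul_eq_mul, smul_eq_mul] at h3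
    linear_combination (-derivativeFun F) * h1 + F * h3 + F * h2
  refine ⟨part1, ?_⟩
  have logd : derivativeFun (psLog F) * F = derivativeFun F := psLog_deriv F hF
  have hu : IsUnit F := isUnit_iff_constantCoeff.mpr (by rw [hF]; exact isUnit_one)
  have h5 : (derivativeFun (psLog F) - substNeg S) * (1 - X ^ 2) = -X := by
    apply hu.mul_left_cancel
    linear_combination ((1 : PowerSeries A) - X ^ 2) * logd + part1
  have hu2 : IsUnit ((1 : PowerSeries A) - X ^ 2) := by
    apply isUnit_iff_constantCoeff.mpr
    rw [map_sub, map_one, map_pow, constantCoeff_X]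
    norm_num
  have h7 : derivativeFun (psLog F) - substNeg S
      = PowerSeries.mk fun n => if Odd n then (-1 : A) else 0 := by
    apply hu2.mul_left_cancel
    have h6 := oddser_mul (A := A)
    linear_combination h5 - h6
  intro k hk
  have hco := congrArg (PowerSeries.coeff (R := A) (k - 1)) h7
  rw [map_sub, coeff_mk] at hco
  have hk1 : k - 1 + 1 = k := by omega
  have hL' : PowerSeries.coeff (R := A) (k - 1) (derivativeFun (psLog F)) = D k := by
    rw [coeff_derivativeFun', ← hD, coeff_mk, hk1, if_neg (by omega : ¬ k = 0)]
    have hcast : ((k - 1 : ℕ) : A) + 1 = ((k : ℕ) : A) := by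
      exact_mod_cast congrArg (fun n : ℕ => (n : A)) hk1
    rw [hcast, smul_mul_assoc, show ((k : ℕ) : A) = algebraMap ℚ A ((k : ℕ) : ℚ) from
      (map_natCast _ k).symm, mul_comm, ← Algebra.smul_def, smul_smul,
      inv_mul_cancel₀ (Nat.cast_ne_zero.mpr (by omega)), one_smul]
  have hT : PowerSeries.coeff (R := A) (k - 1) (substNeg S) = ∑ j ∈ Finset.range k,
      ((-1 : A) ^ j) * PowerSeries.coeff (R := A) (k - 1 - j) (PowerSeries.coeff (R := PowerSeries A) j S) := by
    rw [coeff_substNeg, hk1]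
  have hc : (if Odd (k - 1) then (-1 : A) else 0) = (if Even k then (-1 : A) else 0) := by
    have : Odd (k - 1) ↔ Even k := by rw [Nat.odd_iff, Nat.even_iff]; omega
    by_cases he : Even k
    · rw [if_pos he, if_pos (this.mpr he)]
    · rw [if_neg he, if_neg (fun hh => he (this.mp hh))]
  rw [hL', hT, hc] at hco
  linear_combination hco
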